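/- Let X be a paracompact Hausdorff space with an open cover (Uᵢ)_{i ∈ I}, and for each i let fᵢ : W|_{Uᵢ} → Eᵢ be a continuous fiberwise-injective vector bundle morphism from the restriction of a vector bundle W to a trivial bundle Uᵢ × ℝ^{nᵢ}, where I is finite. Then there is a continuous fiberwise-injective vector bundle morphism W → X × ℝ^N with N = Σᵢ nᵢ; consequently W is a direct summand of the trivial bundle X × ℝ^N. -/

import Mathlib

/-!
Scaling the `fᵢ` by a partition of unity `φᵢ` subordinate to `(Uᵢ)` gives `w ↦ (φᵢ(x) fᵢ(w))ᵢ`,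
injective on every fibre because some `φᵢ(x) > 0`. A left inverse of an injective morphism
`g : W → X × E` exists locally: in a trivialization `g` is a continuous family `M x` of injective
maps `F → E`, and if `L₀` is a left inverse of `M x₀` then `L₀ ∘ M x` is invertible near `x₀`,
so `(L₀ ∘ M x)⁻¹ ∘ L₀` is a continuous left inverse of `M x` there. An average of left inverses
is a left inverse, so the local ones glue along a partition of unity.
-/

open Bundle Set Function Filter Topology

theorem continuousAt_finsum {ι X M : Type*} [TopologicalSpace X] [TopologicalSpace M]
    [AddCommMonoid M] [ContinuousAdd M] {f : ι → X → M} {x : X}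
    (hf : LocallyFinite fun i => support (f i)) (hc : ∀ i, ContinuousAt (f i) x) :
    ContinuousAt (fun y => ∑ᶠ i, f i y) x := by
  obtain ⟨s, hs⟩ := finsum_eventually_eq_sum hf x
  exact ContinuousAt.congr (tendsto_finsetSum s fun i _ => hc i) (hs.mono fun y hy => hy.symm)

theorem exists_continuousOn_leftInverse {X 𝕜 E F : Type*} [TopologicalSpace X]
    [NontriviallyNormedField 𝕜] [CompleteSpace 𝕜]
    [NormedAddCommGroup E] [NormedSpace 𝕜 E] [FiniteDimensional 𝕜 E]
    [NormedAddCommGroup F] [NormedSpace 𝕜 F]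
    {M : X → F →L[𝕜] E} {s : Set X} (hM : ContinuousOn M s) (hs : IsOpen s) {x₀ : X}
    (hx₀ : x₀ ∈ s) (hinj : Injective (M x₀)) :
    ∃ V ⊆ s, IsOpen V ∧ x₀ ∈ V ∧ ∃ R : X → E →L[𝕜] F,
      ContinuousOn R V ∧ ∀ x ∈ V, R x ∘L M x = .id 𝕜 F := by
  have : FiniteDimensional 𝕜 F := .of_injective (M x₀ : F →ₗ[𝕜] E) hinj
  have : CompleteSpace F := FiniteDimensional.complete 𝕜 F
  obtain ⟨L, hL⟩ := (M x₀ : F →ₗ[𝕜] E).exists_leftInverse_of_injective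
    (LinearMap.ker_eq_bot.2 hinj)
  set L₀ : E →L[𝕜] F := LinearMap.toContinuousLinearMap L
  have hP : ContinuousOn (fun x => L₀ ∘L M x) s := continuousOn_const.clm_comp hM
  have hPx₀ : L₀ ∘L M x₀ = 1 := ContinuousLinearMap.coe_injective hL
  refine ⟨s ∩ (fun x => L₀ ∘L M x) ⁻¹' {u | IsUnit u}, inter_subset_left,
    hP.isOpen_inter_preimage hs Units.isOpen, ⟨hx₀, by simp [hPx₀]⟩,
    fun x => Ring.inverse (L₀ ∘L M x) ∘L L₀, ?_, ?_⟩
  · refine ContinuousOn.clm_comp ?_ continuousOn_const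
    rintro x ⟨hxs, ⟨u, hu⟩⟩
    have hinv : ContinuousAt Ring.inverse (L₀ ∘L M x) := by
      simpa only [← hu] using NormedRing.inverse_continuousAt u
    exact ContinuousAt.comp_continuousWithinAt (g := Ring.inverse) hinv
      ((hP x hxs).mono inter_subset_left)
  · rintro x ⟨-, hx⟩
    rw [ContinuousLinearMap.comp_assoc]
    exact Ring.inverse_mul_cancel _ hx

theorem exists_continuous_injective_pi {X F ι : Type*} [TopologicalSpace X] [ParacompactSpace X]
    [T2Space X] [TopologicalSpace F] {W : X → Type*} [∀ x, AddCommGroup (W x)]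
    [∀ x, Module ℝ (W x)] [∀ x, TopologicalSpace (W x)] [TopologicalSpace (TotalSpace F W)]
    [FiberBundle F W] {E : ι → Type*} [∀ i, NormedAddCommGroup (E i)] [∀ i, NormedSpace ℝ (E i)]
    {U : ι → Set X} (hU : ∀ i, IsOpen (U i)) (hcover : ∀ x, ∃ i, x ∈ U i)
    {f : ∀ i x, W x →ₗ[ℝ] E i}
    (hf : ∀ i, ContinuousOn (fun p : TotalSpace F W => (p.proj, f i p.proj p.2)) (π F W ⁻¹' U i))
    (hinj : ∀ i, ∀ x ∈ U i, Injective (f i x)) :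
    ∃ g : ∀ x, W x →ₗ[ℝ] (∀ i, E i),
      Continuous (fun p : TotalSpace F W => (p.proj, g p.proj p.2)) ∧ ∀ x, Injective (g x) := by
  obtain ⟨ψ, hψU⟩ := PartitionOfUnity.exists_isSubordinate isClosed_univ U hU
    fun x _ => mem_iUnion.2 (hcover x)
  have hproj := FiberBundle.continuous_proj F W
  refine ⟨fun x => LinearMap.pi fun i => ψ i x • f i x, ?_, fun x w w' hww' => ?_⟩
  · refine hproj.prodMk (continuous_pi fun i => continuous_of_tsupport fun p hp => ?_)
    have hpU : p.proj ∈ U i := hψU i <| tsupport_comp_subset_preimage (ψ i) hproj <|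
      tsupport_smul_subset_left (fun p : TotalSpace F W => ψ i p.proj) _ hp
    exact ((ψ i).continuous.comp hproj).continuousAt.smul
      ((continuous_snd.comp_continuousOn (hf i)).continuousAt
        (((hU i).preimage hproj).mem_nhds hpU))
  · obtain ⟨i, hi⟩ := ψ.exists_pos (mem_univ x)
    apply hinj i x (hψU i (subset_closure hi.ne'))
    exact smul_right_injective _ hi.ne' (congrFun hww' i)

section

variable {X 𝕜 F E : Type*} [TopologicalSpace X] [NontriviallyNormedField 𝕜] [CompleteSpace 𝕜]
  [NormedAddCommGroup F] [NormedSpace 𝕜 F] [NormedAddCommGroup E] [NormedSpace 𝕜 E]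
  {W : X → Type*} [∀ x, AddCommGroup (W x)] [∀ x, Module 𝕜 (W x)]
  [∀ x, TopologicalSpace (W x)] [TopologicalSpace (TotalSpace F W)]
  [FiberBundle F W] [VectorBundle 𝕜 F W]

theorem exists_local_leftInverse [FiniteDimensional 𝕜 E] {g : ∀ x, W x →ₗ[𝕜] E}
    (hg : Continuous fun p : TotalSpace F W => (p.proj, g p.proj p.2)) {x₀ : X}
    (hx₀ : Injective (g x₀)) :
    ∃ V : Set X, IsOpen V ∧ x₀ ∈ V ∧ ∃ ρ : ∀ x, E →ₗ[𝕜] W x,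
      ContinuousOn (fun q : X × E => (TotalSpace.mk q.1 (ρ q.1 q.2) : TotalSpace F W))
        (Prod.fst ⁻¹' V) ∧
      ∀ x ∈ V, ρ x ∘ₗ g x = LinearMap.id := by
  set e := trivializationAt F W x₀
  have he : x₀ ∈ e.baseSet := FiberBundle.mem_baseSet_trivializationAt F W x₀
  have hinj : Injective (g x₀ ∘ₗ e.symmₗ 𝕜 x₀) :=
    hx₀.comp (LeftInverse.injective (e.linearMapAt_symmₗ he))
  have : FiniteDimensional 𝕜 F := .of_injective _ hinj
  set M : X → F →L[𝕜] E := fun x => LinearMap.toContinuousLinearMap (g x ∘ₗ e.symmₗ 𝕜 x)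
  have hM : ContinuousOn M e.baseSet := by
    refine continuousOn_clm_apply.2 fun y => ?_
    have hsymm : ContinuousOn (fun x => (TotalSpace.mk x (e.symm x y) : TotalSpace F W))
        e.baseSet :=
      e.continuousOn_symm.comp (continuous_id.prodMk continuous_const).continuousOn
        fun x hx => ⟨hx, mem_univ y⟩
    refine ((continuous_snd.comp hg).comp_continuousOn hsymm).congr fun x hx => ?_
    simp [M, e.symmₗ_apply hx]
  obtain ⟨V, hVe, hV, hx₀V, R, hR, hRM⟩ :=
    exists_continuousOn_leftInverse hM e.open_baseSet he hinj
  refine ⟨V, hV, hx₀V, fun x => e.symmₗ 𝕜 x ∘ₗ (R x : E →ₗ[𝕜] F), ?_, ?_⟩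
  · have hRq : ContinuousOn (fun q : X × E => (q.1, R q.1 q.2)) (Prod.fst ⁻¹' V) :=
      continuousOn_fst.prodMk ((hR.comp continuousOn_fst fun q hq => hq).clm_apply
        continuousOn_snd)
    refine (e.continuousOn_symm.comp hRq fun q hq => ⟨hVe hq, mem_univ _⟩).congr
      fun q hq => ?_
    simp [e.symmₗ_apply (hVe hq)]
  · intro x hx
    ext w
    have hgw : g x w = M x (e.linearMapAt 𝕜 x w) := by
      simp [M, e.symmₗ_linearMapAt (hVe hx)]
    simp only [LinearMap.comp_apply, ContinuousLinearMap.coe_coe, hgw,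
      ← ContinuousLinearMap.comp_apply, hRM x hx]
    exact e.symmₗ_linearMapAt (hVe hx) w

end

section

variable {X F E : Type*} [TopologicalSpace X] [NormedAddCommGroup F] [NormedSpace ℝ F]
  [NormedAddCommGroup E] [NormedSpace ℝ E]
  {W : X → Type*} [∀ x, AddCommGroup (W x)] [∀ x, Module ℝ (W x)]
  [∀ x, TopologicalSpace (W x)] [TopologicalSpace (TotalSpace F W)]
  [FiberBundle F W] [VectorBundle ℝ F W]

theorem continuous_totalSpaceMk_finsum_smul {ι Y : Type*} [TopologicalSpace Y] {f : Y → X}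
    (hf : Continuous f) {t : Set X} (ψ : PartitionOfUnity ι X t) {V : ι → Set X}
    (hV : ∀ i, IsOpen (V i)) (hψV : ψ.IsSubordinate V) {s : ι → ∀ y, W (f y)}
    (hs : ∀ i, ContinuousOn (fun y => (TotalSpace.mk (f y) (s i y) : TotalSpace F W))
      (f ⁻¹' V i)) :
    Continuous fun y => (TotalSpace.mk (f y) (∑ᶠ i, ψ i (f y) • s i y) : TotalSpace F W) := by
  refine continuous_iff_continuousAt.2 fun y₀ => ?_
  rw [FiberBundle.continuousAt_totalSpace]
  refine ⟨hf.continuousAt, ?_⟩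
  set e := trivializationAt F W (f y₀)
  have he : f y₀ ∈ e.baseSet := FiberBundle.mem_baseSet_trivializationAt F W (f y₀)
  have hfin : ∀ x, (support fun i => ψ i x).Finite := ψ.locallyFinite.point_finite
  have hsum : ∀ᶠ y in 𝓝 y₀, ∑ᶠ i, ψ i (f y) • (e ⟨f y, s i y⟩).2 =
      (e ⟨f y, ∑ᶠ i, ψ i (f y) • s i y⟩).2 := by
    filter_upwards [hf.continuousAt (e.open_baseSet.mem_nhds he)] with y hy
    have hcoe : ∀ v : W (f y), (e ⟨f y, v⟩).2 = e.linearMapAt ℝ (f y) v := fun v => by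
      rw [e.coe_linearMapAt_of_mem hy]
    simp only [hcoe]
    rw [map_finsum (e.linearMapAt ℝ (f y)) (f := fun i => ψ i (f y) • s i y)
      ((hfin (f y)).subset (support_smul_subset_left _ _))]
    simp only [map_smul]
  refine ContinuousAt.congr ?_ hsum
  refine continuousAt_finsum ((ψ.locallyFinite.preimage_continuous hf).subset
    fun i => support_smul_subset_left _ _) fun i => ?_
  by_cases hi : f y₀ ∈ tsupport (ψ i)
  · have hsi : ContinuousAt (fun y => (TotalSpace.mk (f y) (s i y) : TotalSpace F W)) y₀ :=
      (hs i).continuousAt (((hV i).preimage hf).mem_nhds (hψV i hi))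
    have he' : ContinuousAt (fun p : TotalSpace F W => (e p).2) ⟨f y₀, s i y₀⟩ :=
      continuous_snd.continuousAt.comp
        (e.continuousOn.continuousAt (e.open_source.mem_nhds (e.mem_source.2 he)))
    exact ((ψ i).continuous.continuousAt.comp hf.continuousAt).smul (he'.comp_of_eq hsi rfl)
  · refine continuousAt_const.congr (f := fun _ => (0 : F)) ?_
    filter_upwards [hf.continuousAt.eventually (notMem_tsupport_iff_eventuallyEq.1 hi)] with y hy
    simp [hy]

theorem exists_continuous_leftInverse [ParacompactSpace X] [T2Space X] [FiniteDimensional ℝ E]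
    {g : ∀ x, W x →ₗ[ℝ] E} (hg : Continuous fun p : TotalSpace F W => (p.proj, g p.proj p.2))
    (hinj : ∀ x, Injective (g x)) :
    ∃ r : ∀ x, E →ₗ[ℝ] W x,
      Continuous (fun q : X × E => (TotalSpace.mk q.1 (r q.1 q.2) : TotalSpace F W)) ∧
      ∀ x, r x ∘ₗ g x = LinearMap.id := by
  choose V hV hxV ρ hρ hρg using fun x₀ => exists_local_leftInverse hg (hinj x₀)
  obtain ⟨ψ, hψV⟩ := PartitionOfUnity.exists_isSubordinate isClosed_univ V hV
    fun x _ => mem_iUnion.2 ⟨x, hxV x⟩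
  have happly : ∀ x v, (∑ᶠ a, ψ a x • ρ a x) v = ∑ᶠ a, ψ a x • ρ a x v := fun x v => by
    rw [← LinearMap.applyₗ_apply_apply (R := ℝ), map_finsum]
    · rfl
    · exact (ψ.locallyFinite.point_finite x).subset
        (support_smul_subset_left (fun a => ψ a x) (fun a => ρ a x))
  refine ⟨fun x => ∑ᶠ a, ψ a x • ρ a x, ?_, fun x => ?_⟩
  · simpa only [happly] using continuous_totalSpaceMk_finsum_smul continuous_fst ψ hV hψV
      (s := fun a q => ρ a q.1 q.2) hρ
  · ext w
    have hterm : ∀ a, ψ a x • ρ a x (g x w) = ψ a x • w := fun a => by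
      by_cases ha : ψ a x = 0
      · simp [ha]
      · rw [← LinearMap.comp_apply, hρg a x (hψV a (subset_closure ha)), LinearMap.id_apply]
    simp only [LinearMap.comp_apply, happly, hterm, ← finsum_smul, ψ.sum_eq_one (mem_univ x),
      one_smul, LinearMap.id_apply]

end

/-- Let `X` be paracompact Hausdorff with a finite open cover `(Uᵢ)`, `W` a real vector
bundle over `X`, and for each `i` a continuous fiberwise-injective vector bundle
morphism `fᵢ : W|_{Uᵢ} → Uᵢ × ℝ^{nᵢ}`.  Then there is a continuous fiberwise-injective
vector bundle morphism `W → X × ℝ^N` with `N = ∑ nᵢ`; consequently `W` is a direct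
summand of the trivial bundle `X × ℝ^N` (there is a continuous bundle retraction). -/
theorem stmt_19 {X F : Type*} [TopologicalSpace X] [ParacompactSpace X] [T2Space X]
    [NormedAddCommGroup F] [NormedSpace ℝ F]
    (W : X → Type*) [∀ x, AddCommGroup (W x)] [∀ x, Module ℝ (W x)]
    [∀ x, TopologicalSpace (W x)] [TopologicalSpace (Bundle.TotalSpace F W)]
    [FiberBundle F W] [VectorBundle ℝ F W]
    {m : ℕ} (U : Fin m → Set X)
    (hUopen : ∀ i, IsOpen (U i)) (hUcover : ∀ x, ∃ i, x ∈ U i)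
    (n : Fin m → ℕ)
    (f : ∀ (i : Fin m) (x : X), W x →ₗ[ℝ] (Fin (n i) → ℝ))
    (hfc : ∀ i, ContinuousOn
      (fun p : Bundle.TotalSpace F W => (p.proj, f i p.proj p.2))
      (Bundle.TotalSpace.proj ⁻¹' U i))
    (hfinj : ∀ i, ∀ x ∈ U i, Function.Injective (f i x)) :
    ∃ g : ∀ x : X, W x →ₗ[ℝ] (Fin (∑ i, n i) → ℝ),
      Continuous (fun p : Bundle.TotalSpace F W => (p.proj, g p.proj p.2)) ∧
      (∀ x, Function.Injective (g x)) ∧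
      ∃ r : ∀ x : X, (Fin (∑ i, n i) → ℝ) →ₗ[ℝ] W x,
        Continuous (fun q : X × (Fin (∑ i, n i) → ℝ) =>
          (Bundle.TotalSpace.mk q.1 (r q.1 q.2) : Bundle.TotalSpace F W)) ∧
        ∀ x, (r x) ∘ₗ (g x) = LinearMap.id := by
  obtain ⟨g, hg, hinj⟩ := exists_continuous_injective_pi hUopen hUcover hfc hfinj
  let L : (∀ i, Fin (n i) → ℝ) ≃L[ℝ] (Fin (∑ i, n i) → ℝ) :=
    ((LinearEquiv.piCurry ℝ fun i (_ : Fin (n i)) => ℝ).symm.trans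
      (LinearEquiv.funCongrLeft ℝ ℝ finSigmaFinEquiv.symm)).toContinuousLinearEquiv
  have hLg : Continuous fun p : TotalSpace F W => (p.proj, L (g p.proj p.2)) :=
    (continuous_fst.prodMk (L.continuous.comp continuous_snd)).comp hg
  have hLinj : ∀ x, Injective (L.toLinearMap ∘ₗ g x) := fun x => L.injective.comp (hinj x)
  obtain ⟨r, hr, hrg⟩ := exists_continuous_leftInverse hLg hLinj
  exact ⟨_, hLg, hLinj, r, hr, hrg⟩
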